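/- arXiv:2310.05833 — 2 statements merged into one kernel-verified Lean document; each statement's English description precedes it below -/
import Mathlib

section
/- Fix m ≥ 2. Then the distributional variance estimator is weakly consistent in the number of outer samples: for every ε > 0, μ_{n,m}({X : |V̂ar_k^{(n,m)}(X) − Var_k(ν)| ≥ ε}) → 0 as n → ∞. -/
open MeasureTheory ProbabilityTheory

noncomputable section

/-- The σ-algebra on the space of probability measures induced from the σ-algebra on
`Measure Y` generated by the evaluation maps. -/
instance {Y : Type*} [MeasurableSpace Y] : MeasurableSpace (ProbabilityMeasure Y) :=
  MeasurableSpace.comap (fun P => (P : Measure Y)) inferInstance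

/-- The kernel bilinear form `⟨P|k|Q⟩ = ∫∫ k(x,y) dP(x) dQ(y)`. -/
def kerInner {Y : Type*} [MeasurableSpace Y] (k : Y → Y → ℝ) (P Q : Measure Y) : ℝ :=
  ∫ x, ∫ y, k x y ∂Q ∂P

/-- `join(ν)`: the probability measure `A ↦ ∫ P(A) dν(P)`. -/
def pmJoin {Y : Type*} [MeasurableSpace Y] (ν : Measure (ProbabilityMeasure Y)) : Measure Y :=
  ν.bind (fun P => (P : Measure Y))

/-- The two-stage sampling law `μ_{n,m}` on `Fin n → Fin m → Y`: sample
`P₁, …, Pₙ` i.i.d. from `ν`, then conditionally on `Pᵢ` sample `X_{i1}, …, X_{im}`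
i.i.d. from `Pᵢ`, independently across `i`. -/
def twoStage {Y : Type*} [MeasurableSpace Y] (ν : Measure (ProbabilityMeasure Y))
    (n m : ℕ) : Measure (Fin n → Fin m → Y) :=
  (Measure.pi fun _ : Fin n => ν).bind
    (fun Ps => Measure.pi fun i : Fin n => Measure.pi fun _ : Fin m => (Ps i : Measure Y))

/-- The distributional variance estimator. -/
def varEst {Y : Type*} (k : Y → Y → ℝ) (n m : ℕ) (X : Fin n → Fin m → Y) : ℝ :=
  (1 / ((n : ℝ) * (m : ℝ) * ((m : ℝ) - 1))) *
      ∑ i, ∑ j, ∑ t ∈ Finset.univ.erase j, k (X i j) (X i t)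
  - (1 / ((n : ℝ) * ((n : ℝ) - 1) * (m : ℝ) ^ 2)) *
      ∑ i, ∑ s ∈ Finset.univ.erase i, ∑ j, ∑ t, k (X i j) (X s t)

/-!
Split the sample into its rows `Xᵢ = (X_{i1}, …, X_{im})`. The rows are i.i.d. with law
`blockLaw ν m`, the `ν`-mixture of the product measures `P^{⊗m}`, and for `n ≥ 2` the estimator is
exactly the U-statistic `(n (n-1))⁻¹ ∑_{i ≠ s} h(Xᵢ, Xₛ)` of the bounded kernel
`h(B, C) = uStat k B - crossMean k B C`. The first term has mean `∫ ⟨P|k|P⟩ dν`, since distinct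
coordinates of a row are independent given `P`; the second has mean `⟨join ν|k|join ν⟩`, since
distinct rows are independent and each coordinate of a row has law `join ν`.

After centring `h` at its mean, two terms `h(Xᵢ, Xₛ)`, `h(Xⱼ, Xₜ)` with `{i, s} ∩ {j, t} = ∅` are
independent and so uncorrelated; only `O(n³)` of the `n⁴` products in the square of the sum
survive, the U-statistic has variance `O(1/n)`, and Chebyshev's inequality concludes.
-/

open Finset Filter Function

section BoundedFunctions

variable {α : Type*} [MeasurableSpace α] {μ : Measure α} {f : α → ℝ} {C : ℝ}

theorem integrable_of_abs_le [IsFiniteMeasure μ] (hf : Measurable f) (hC : ∀ x, |f x| ≤ C) :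
    Integrable f μ :=
  .of_bound hf.aestronglyMeasurable C (ae_of_all _ fun x => (Real.norm_eq_abs _).trans_le (hC x))

theorem abs_integral_le_of_abs_le [IsProbabilityMeasure μ] (hC : ∀ x, |f x| ≤ C) :
    |∫ x, f x ∂μ| ≤ C := by
  simpa using norm_integral_le_of_norm_le_const (μ := μ)
    (ae_of_all _ fun x => (Real.norm_eq_abs (f x)).trans_le (hC x))

end BoundedFunctions

section GiryMonad

variable {α β E : Type*} [MeasurableSpace α] [MeasurableSpace β]
  [NormedAddCommGroup E] [NormedSpace ℝ E]

theorem MeasureTheory.Measure.integral_bind {μ : Measure β} {κ : β → Measure α}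
    (hκ : Measurable κ) {f : α → E} (hf : Integrable f (μ.bind κ)) :
    ∫ x, f x ∂μ.bind κ = ∫ b, ∫ x, f x ∂κ b ∂μ := by
  let K : Kernel β α := ⟨κ, hκ⟩
  change Integrable f (K ∘ₘ μ) at hf
  change ∫ x, f x ∂(K ∘ₘ μ) = ∫ b, ∫ x, f x ∂K b ∂μ
  rw [Measure.comp_eq_comp_const_apply] at hf ⊢
  rw [Kernel.integral_comp hf]
  rfl

theorem MeasureTheory.MeasurePreserving.integral_comp_of_aestronglyMeasurable {μ : Measure α}
    {ν : Measure β} {f : α → β} (hf : MeasurePreserving f μ ν) {g : β → E}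
    (hg : AEStronglyMeasurable g ν) : ∫ x, g (f x) ∂μ = ∫ y, g y ∂ν := by
  rw [← hf.map_eq, integral_map hf.measurable.aemeasurable (hf.map_eq ▸ hg)]

theorem measurable_measure_pi {ι : Type*} [Fintype ι] {κ : ι → β → Measure α}
    [∀ i b, IsProbabilityMeasure (κ i b)] (hκ : ∀ i, Measurable (κ i)) :
    Measurable fun b => Measure.pi fun i => κ i b := by
  refine .measure_of_isPiSystem_of_isProbabilityMeasure generateFrom_pi.symm isPiSystem_pi ?_
  rintro _ ⟨s, hs, rfl⟩
  simp_rw [Measure.pi_pi]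
  exact Finset.measurable_prod _ fun i _ => (Measure.measurable_coe (hs i trivial)).comp (hκ i)

theorem MeasureTheory.Measure.pi_bind {ι : Type*} [Fintype ι] {μ : ι → Measure β}
    [∀ i, IsProbabilityMeasure (μ i)] {κ : ι → β → Measure α}
    [∀ i b, IsProbabilityMeasure (κ i b)] (hκ : ∀ i, Measurable (κ i)) :
    (Measure.pi μ).bind (fun x => Measure.pi fun i => κ i (x i))
      = Measure.pi fun i => (μ i).bind (κ i) := by
  have : ∀ i, IsProbabilityMeasure ((μ i).bind (κ i)) := fun i =>
    isProbabilityMeasure_bind (hκ i).aemeasurable (ae_of_all _ inferInstance)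
  have hκs : ∀ {t : Set α}, MeasurableSet t → ∀ i, Measurable fun b => κ i b t :=
    fun ht i => (Measure.measurable_coe ht).comp (hκ i)
  have hpi : Measurable fun x : ι → β => Measure.pi fun i => κ i (x i) :=
    measurable_measure_pi (κ := fun i (x : ι → β) => κ i (x i)) fun i =>
      (hκ i).comp (measurable_pi_apply i)
  refine (Measure.pi_eq fun s hs => ?_).symm
  rw [Measure.bind_apply (.univ_pi hs) hpi.aemeasurable]
  simp_rw [Measure.pi_pi]
  refine (lintegral_prod_eq_prod_lintegral_of_indepFun univ
    (fun i (x : ι → β) => κ i (x i) (s i))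
    (iIndepFun_pi fun i => (hκs (hs i) i).aemeasurable)
    fun i => (hκs (hs i) i).comp (measurable_pi_apply i)).trans
    (Finset.prod_congr rfl fun i _ => ?_)
  rw [Measure.bind_apply (hs i) (hκ i).aemeasurable,
    (measurePreserving_eval μ i).lintegral_comp (hκs (hs i) i)]

end GiryMonad

section IIDCoordinates

variable {α ι : Type*} [MeasurableSpace α] [Fintype ι] {μ : Measure α}
  [IsProbabilityMeasure μ]

theorem measurePreserving_pi_pair {i j : ι} (hij : i ≠ j) :
    MeasurePreserving (fun x : ι → α => (x i, x j)) (Measure.pi fun _ => μ) (μ.prod μ) := by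
  refine ⟨by fun_prop, ?_⟩
  have hindep : IndepFun (fun x : ι → α => x i) (fun x => x j) (Measure.pi fun _ => μ) :=
    (iIndepFun_pi (X := fun _ => id) fun _ => aemeasurable_id).indepFun hij
  rw [(indepFun_iff_map_prod_eq_prod_map_map
    (measurable_pi_apply i).aemeasurable (measurable_pi_apply j).aemeasurable).1 hindep,
    (measurePreserving_eval _ i).map_eq, (measurePreserving_eval _ j).map_eq]

theorem integral_comp_pi_pair {E : Type*} [NormedAddCommGroup E] [NormedSpace ℝ E]
    {i j : ι} (hij : i ≠ j) {G : α → α → E} (hG : Integrable (uncurry G) (μ.prod μ)) :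
    ∫ x, G (x i) (x j) ∂Measure.pi (fun _ => μ) = ∫ y, ∫ z, G y z ∂μ ∂μ :=
  (measurePreserving_pi_pair hij).integral_comp_of_aestronglyMeasurable hG.1 |>.trans
    (integral_prod _ hG)

theorem integral_mul_comp_pi_pair_of_disjoint {i j s t : ι} (hij : i ≠ j) (hst : s ≠ t)
    (his : i ≠ s) (hit : i ≠ t)
    (hjs : j ≠ s) (hjt : j ≠ t) {G H : α → α → ℝ}
    (hG : Integrable (uncurry G) (μ.prod μ)) (hH : Integrable (uncurry H) (μ.prod μ)) :
    ∫ x, G (x i) (x j) * H (x s) (x t) ∂Measure.pi (fun _ => μ)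
      = (∫ y, ∫ z, G y z ∂μ ∂μ) * ∫ y, ∫ z, H y z ∂μ ∂μ := by
  have hij' := measurePreserving_pi_pair (μ := μ) hij
  have hst' := measurePreserving_pi_pair (μ := μ) hst
  have hindep := ((iIndepFun_pi (X := fun _ => id) (μ := fun _ : ι => μ)
    fun _ => aemeasurable_id).indepFun_prodMk_prodMk measurable_pi_apply i j s t
      his hit hjs hjt).comp₀ hij'.measurable.aemeasurable hst'.measurable.aemeasurable
    (hij'.map_eq ▸ hG.1.aemeasurable) (hst'.map_eq ▸ hH.1.aemeasurable)
  rw [← integral_comp_pi_pair hij hG, ← integral_comp_pi_pair hst hH]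
  exact hindep.integral_mul_eq_mul_integral
    (hij'.integrable_comp_of_integrable hG).1 (hst'.integrable_comp_of_integrable hH).1

end IIDCoordinates

section UStatistic

variable {α ι : Type*} [Fintype ι]

def uStat (G : α → α → ℝ) (x : ι → α) : ℝ :=
  ((Fintype.card ι : ℝ) * (Fintype.card ι - 1))⁻¹ * ∑ p ∈ univ.offDiag, G (x p.1) (x p.2)

theorem sum_offDiag_univ [DecidableEq ι] {M : Type*} [AddCommMonoid M] (f : ι × ι → M) :
    ∑ p ∈ (univ : Finset ι).offDiag, f p = ∑ i, ∑ j ∈ univ.erase i, f (i, j) :=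
  sum_finset_product _ _ (fun i => univ.erase i) fun p => by simp [and_comm, eq_comm]

theorem card_offDiag_univ :
    ((univ : Finset ι).offDiag.card : ℝ) = Fintype.card ι * (Fintype.card ι - 1) := by
  rw [offDiag_card, card_univ, Nat.cast_sub (Nat.le_mul_self _)]
  push_cast
  ring

theorem card_mul_card_sub_one_pos (hι : 2 ≤ Fintype.card ι) :
    0 < (Fintype.card ι : ℝ) * (Fintype.card ι - 1) := by
  have : (2 : ℝ) ≤ Fintype.card ι := by exact_mod_cast hι
  nlinarith

theorem uStat_sub (G H : α → α → ℝ) (x : ι → α) :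
    uStat (fun a b => G a b - H a b) x = uStat G x - uStat H x := by
  simp only [uStat, sum_sub_distrib, mul_sub]

theorem uStat_const (hι : 2 ≤ Fintype.card ι) (c : ℝ) (x : ι → α) :
    uStat (fun _ _ => c) x = c := by
  rw [uStat, sum_const, nsmul_eq_mul, card_offDiag_univ,
    inv_mul_cancel_left₀ (card_mul_card_sub_one_pos hι).ne']

theorem uStat_sub_const (hι : 2 ≤ Fintype.card ι) (G : α → α → ℝ) (c : ℝ)
    (x : ι → α) :
    uStat G x - c = uStat (fun a b => G a b - c) x := by
  rw [uStat_sub, uStat_const hι]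

theorem uStat_fst [DecidableEq ι] (hι : 2 ≤ Fintype.card ι) (f : α → ℝ) (x : ι → α) :
    uStat (fun a _ => f a) x = (Fintype.card ι : ℝ)⁻¹ * ∑ i, f (x i) := by
  have hpos := card_mul_card_sub_one_pos hι
  simp only [uStat, sum_offDiag_univ, sum_const, card_erase_of_mem (mem_univ _), card_univ,
    nsmul_eq_mul, ← mul_sum]
  rw [Nat.cast_sub (by omega), Nat.cast_one, ← mul_assoc, mul_inv, mul_assoc _ _ (_ - 1),
    inv_mul_cancel₀ (by nlinarith), mul_one]

theorem abs_uStat_le (hι : 2 ≤ Fintype.card ι) {G : α → α → ℝ} {C : ℝ}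
    (hC : ∀ a b, |G a b| ≤ C) (x : ι → α) : |uStat G x| ≤ C := by
  have hpos := card_mul_card_sub_one_pos hι
  calc |uStat G x| ≤ ((Fintype.card ι : ℝ) * (Fintype.card ι - 1))⁻¹
        * ∑ p ∈ univ.offDiag, |G (x p.1) (x p.2)| := by
        rw [uStat, abs_mul, abs_of_pos (inv_pos.2 hpos)]
        gcongr
        exact abs_sum_le_sum_abs _ _
    _ ≤ ((Fintype.card ι : ℝ) * (Fintype.card ι - 1))⁻¹ * ∑ p ∈ univ.offDiag, C := by
        gcongr with p
        exact hC _ _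
    _ = C := by
        rw [sum_const, nsmul_eq_mul, card_offDiag_univ, inv_mul_cancel_left₀ hpos.ne']

end UStatistic

section UStatisticMoments

variable {α ι : Type*} [Fintype ι] [MeasurableSpace α] {μ : Measure α}
  [IsProbabilityMeasure μ]

theorem integral_uStat (hι : 2 ≤ Fintype.card ι) {G : α → α → ℝ}
    (hG : Integrable (uncurry G) (μ.prod μ)) :
    ∫ x, uStat G x ∂Measure.pi (fun _ : ι => μ) = ∫ y, ∫ z, G y z ∂μ ∂μ := by
  have hint : ∀ p ∈ (univ : Finset ι).offDiag,
      Integrable (fun x : ι → α => G (x p.1) (x p.2)) (Measure.pi fun _ => μ) := fun p hp =>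
    (measurePreserving_pi_pair (mem_offDiag.1 hp).2.2).integrable_comp_of_integrable hG
  simp only [uStat]
  rw [integral_const_mul, integral_finsetSum _ hint,
    sum_congr rfl fun p hp => integral_comp_pi_pair (mem_offDiag.1 hp).2.2 hG, sum_const,
    nsmul_eq_mul, card_offDiag_univ, inv_mul_cancel_left₀ (card_mul_card_sub_one_pos hι).ne']

theorem card_filter_touches_le [DecidableEq ι] (a b : ι) :
    #{q ∈ (univ : Finset (ι × ι)) | q.1 = a ∨ q.1 = b ∨ q.2 = a ∨ q.2 = b}
      ≤ 4 * Fintype.card ι := by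
  calc _ ≤ #(({a, b} ×ˢ univ) ∪ (univ ×ˢ {a, b})) := by
        refine card_le_card fun q hq => ?_
        simp only [mem_filter, mem_univ, true_and] at hq
        simp only [mem_union, mem_product, mem_insert, mem_singleton, mem_univ, and_true,
          true_and]
        tauto
    _ ≤ 2 * Fintype.card ι + Fintype.card ι * 2 := by
        refine (card_union_le _ _).trans ?_
        rw [card_product, card_product, card_univ]
        gcongr <;> exact card_le_two
    _ = 4 * Fintype.card ι := by ring

theorem integral_sq_sum_offDiag_le {G : α → α → ℝ} (hG : Measurable (uncurry G)) {C : ℝ}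
    (hC : ∀ a b, |G a b| ≤ C) (hmean : ∫ y, ∫ z, G y z ∂μ ∂μ = 0) :
    ∫ x, (∑ p ∈ (univ : Finset ι).offDiag, G (x p.1) (x p.2)) ^ 2 ∂Measure.pi (fun _ => μ)
      ≤ 4 * C ^ 2 * Fintype.card ι ^ 3 := by
  classical
  set n := Fintype.card ι
  have hGi : Integrable (uncurry G) (μ.prod μ) := integrable_of_abs_le hG fun z => hC _ _
  have hC2 (p q : ι × ι) (x : ι → α) :
      |G (x p.1) (x p.2) * G (x q.1) (x q.2)| ≤ C ^ 2 := by
    rw [abs_mul, sq]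
    exact mul_le_mul (hC _ _) (hC _ _) (abs_nonneg _) ((abs_nonneg (G (x p.1) (x p.2))).trans
      (hC _ _))
  have hGx (i j : ι) : Measurable fun x : ι → α => G (x i) (x j) :=
    hG.comp (f := fun x : ι → α => (x i, x j)) (by fun_prop)
  have hmeas (p q : ι × ι) :
      Measurable fun x : ι → α => G (x p.1) (x p.2) * G (x q.1) (x q.2) :=
    (hGx p.1 p.2).mul (hGx q.1 q.2)
  have hterm : ∀ p ∈ (univ : Finset ι).offDiag, ∀ q ∈ (univ : Finset ι).offDiag,
      ∫ x, G (x p.1) (x p.2) * G (x q.1) (x q.2) ∂Measure.pi (fun _ => μ)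
        ≤ if q.1 = p.1 ∨ q.1 = p.2 ∨ q.2 = p.1 ∨ q.2 = p.2 then C ^ 2 else 0 := by
    intro p hp q hq
    split_ifs with htouch
    · exact (le_abs_self _).trans (abs_integral_le_of_abs_le (hC2 p q))
    · simp only [not_or] at htouch
      rw [integral_mul_comp_pi_pair_of_disjoint (mem_offDiag.1 hp).2.2 (mem_offDiag.1 hq).2.2
        (Ne.symm htouch.1) (Ne.symm htouch.2.2.1) (Ne.symm htouch.2.1)
        (Ne.symm htouch.2.2.2) hGi hGi, hmean,
        zero_mul]
  calc _ = ∑ p ∈ (univ : Finset ι).offDiag, ∑ q ∈ (univ : Finset ι).offDiag,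
        ∫ x, G (x p.1) (x p.2) * G (x q.1) (x q.2) ∂Measure.pi (fun _ => μ) := by
        simp_rw [sq, sum_mul_sum]
        rw [integral_finsetSum _ fun p _ => integrable_finsetSum _ fun q _ =>
          integrable_of_abs_le (hmeas p q) (hC2 p q)]
        refine sum_congr rfl fun p _ => integral_finsetSum _ fun q _ =>
          integrable_of_abs_le (hmeas p q) (hC2 p q)
    _ ≤ ∑ p ∈ (univ : Finset ι).offDiag, ∑ q ∈ (univ : Finset ι).offDiag,
        if q.1 = p.1 ∨ q.1 = p.2 ∨ q.2 = p.1 ∨ q.2 = p.2 then C ^ 2 else 0 :=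
        sum_le_sum fun p hp => sum_le_sum fun q hq => hterm p hp q hq
    _ ≤ ∑ p ∈ (univ : Finset ι).offDiag, 4 * n * C ^ 2 := by
        refine sum_le_sum fun p _ => ?_
        rw [← sum_filter, sum_const, nsmul_eq_mul]
        gcongr
        exact_mod_cast (card_le_card (filter_subset_filter _ (subset_univ _))).trans
          (card_filter_touches_le p.1 p.2)
    _ ≤ 4 * C ^ 2 * n ^ 3 := by
        rw [sum_const, nsmul_eq_mul, card_offDiag_univ]
        have : (0 : ℝ) ≤ n := n.cast_nonneg
        nlinarith [sq_nonneg C, mul_nonneg this (sq_nonneg C)]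

theorem measurable_uStat {G : α → α → ℝ} (hG : Measurable (uncurry G)) :
    Measurable (uStat (ι := ι) G) :=
  (Finset.measurable_sum _ fun p _ =>
    hG.comp (f := fun x : ι → α => (x p.1, x p.2)) (by fun_prop)).const_mul _

theorem integral_sq_uStat_sub_le (hι : 2 ≤ Fintype.card ι) {G : α → α → ℝ}
    (hG : Measurable (uncurry G)) {C : ℝ} (hC : ∀ a b, |G a b| ≤ C) :
    ∫ x, (uStat G x - ∫ y, ∫ z, G y z ∂μ ∂μ) ^ 2 ∂Measure.pi (fun _ : ι => μ)
      ≤ 64 * C ^ 2 / Fintype.card ι := by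
  set θ := ∫ y, ∫ z, G y z ∂μ ∂μ
  have hθ : |θ| ≤ C := abs_integral_le_of_abs_le fun y => abs_integral_le_of_abs_le (hC y)
  have hGi : Integrable (uncurry G) (μ.prod μ) := integrable_of_abs_le hG fun z => hC _ _
  have hmean : ∫ y, ∫ z, (G y z - θ) ∂μ ∂μ = 0 := by
    have h := integral_prod (fun z : α × α => uncurry G z - θ) (hGi.sub (integrable_const θ))
    rw [integral_sub hGi (integrable_const θ), integral_prod _ hGi] at h
    simpa [θ] using h.symm
  have hsq := integral_sq_sum_offDiag_le (ι := ι) (hG.sub_const θ) (C := 2 * C)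
    (fun a b => (abs_sub _ _).trans (by linarith [hC a b])) hmean
  have hpos := card_mul_card_sub_one_pos hι
  have hn : (2 : ℝ) ≤ Fintype.card ι := by exact_mod_cast hι
  calc _ = ((Fintype.card ι : ℝ) * (Fintype.card ι - 1))⁻¹ ^ 2
        * ∫ x, (∑ p ∈ (univ : Finset ι).offDiag, (G (x p.1) (x p.2) - θ)) ^ 2
          ∂Measure.pi (fun _ : ι => μ) := by
        rw [← integral_const_mul]
        congr with x
        rw [uStat_sub_const hι, uStat, mul_pow]
    _ ≤ ((Fintype.card ι : ℝ) * (Fintype.card ι - 1))⁻¹ ^ 2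
        * (4 * (2 * C) ^ 2 * Fintype.card ι ^ 3) := by gcongr
    _ = 16 * C ^ 2 * Fintype.card ι / (Fintype.card ι - 1) ^ 2 := by field_simp; ring
    _ ≤ 64 * C ^ 2 / Fintype.card ι := by
        rw [div_le_div_iff₀ (by nlinarith) (by linarith)]
        nlinarith [mul_nonneg (sq_nonneg C) (by linarith : (0 : ℝ) ≤ Fintype.card ι - 2)]

end UStatisticMoments

section WeakLaw

variable {α : Type*} [MeasurableSpace α] {μ : Measure α} [IsProbabilityMeasure μ]
  {G : α → α → ℝ} {C : ℝ}

theorem measureReal_abs_uStat_sub_ge_le {ι : Type*} [Fintype ι] (hι : 2 ≤ Fintype.card ι)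
    (hG : Measurable (uncurry G)) (hC : ∀ a b, |G a b| ≤ C) {ε : ℝ} (hε : 0 < ε) :
    (Measure.pi fun _ : ι => μ).real {x | ε ≤ |uStat G x - ∫ y, ∫ z, G y z ∂μ ∂μ|}
      ≤ 64 * C ^ 2 / ε ^ 2 / Fintype.card ι := by
  set θ := ∫ y, ∫ z, G y z ∂μ ∂μ
  have hθ : |θ| ≤ C := abs_integral_le_of_abs_le fun y => abs_integral_le_of_abs_le (hC y)
  have hbound : ∀ x : ι → α, |(uStat G x - θ) ^ 2| ≤ (2 * C) ^ 2 := fun x => by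
    rw [abs_pow]
    exact pow_le_pow_left₀ (abs_nonneg _)
      ((abs_sub _ _).trans (by linarith [abs_uStat_le hι hC x])) 2
  have hmarkov := mul_meas_ge_le_integral_of_nonneg (μ := Measure.pi fun _ : ι => μ)
    (ae_of_all _ fun x => sq_nonneg _)
    (integrable_of_abs_le (((measurable_uStat hG).sub_const θ).pow_const 2) hbound) (ε ^ 2)
  have hset :
      {x : ι → α | ε ≤ |uStat G x - θ|} = {x | ε ^ 2 ≤ (uStat G x - θ) ^ 2} := by
    ext x
    simp only [Set.mem_ofPred_eq, sq_le_sq, abs_of_pos hε]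
  rw [hset, div_right_comm, le_div_iff₀ (by positivity), mul_comm]
  exact hmarkov.trans (integral_sq_uStat_sub_le hι hG hC)

theorem tendsto_measure_abs_uStat_sub_ge (hG : Measurable (uncurry G))
    (hC : ∀ a b, |G a b| ≤ C) {ε : ℝ} (hε : 0 < ε) :
    Tendsto (fun n : ℕ => (Measure.pi fun _ : Fin n => μ)
      {x | ε ≤ |uStat G x - ∫ y, ∫ z, G y z ∂μ ∂μ|}) atTop (nhds 0) := by
  have hreal : Tendsto (fun n : ℕ => (Measure.pi fun _ : Fin n => μ).real
      {x | ε ≤ |uStat G x - ∫ y, ∫ z, G y z ∂μ ∂μ|}) atTop (nhds 0) :=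
    squeeze_zero' (Eventually.of_forall fun _ => measureReal_nonneg)
      (eventually_atTop.2 ⟨2, fun n hn => by
        simpa using measureReal_abs_uStat_sub_ge_le (ι := Fin n) (by simpa using hn) hG hC hε⟩)
      (tendsto_const_div_atTop_nhds_zero_nat _)
  simpa [ofReal_measureReal] using ENNReal.tendsto_ofReal hreal

end WeakLaw

section BlockKernel

variable {Y ι : Type*}

def crossMean [Fintype ι] (k : Y → Y → ℝ) (B C : ι → Y) : ℝ :=
  ((Fintype.card ι : ℝ) ^ 2)⁻¹ * ∑ j, ∑ t, k (B j) (C t)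

def blockKernel [Fintype ι] (k : Y → Y → ℝ) (B C : ι → Y) : ℝ :=
  uStat k B - crossMean k B C

variable {k : Y → Y → ℝ} {K : ℝ}

theorem varEst_eq_uStat_blockKernel (k : Y → Y → ℝ) {n m : ℕ} (hn : 2 ≤ n)
    (X : Fin n → Fin m → Y) : varEst k n m X = uStat (blockKernel k) X := by
  change _ = uStat (fun B C => uStat k B - crossMean k B C) X
  rw [uStat_sub, uStat_fst (by simpa using hn)]
  simp only [varEst, uStat, crossMean, sum_offDiag_univ, Fintype.card_fin, ← mul_sum, one_div,
    mul_inv]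
  ring

theorem abs_crossMean_le [Fintype ι] [Nonempty ι] (hK : ∀ x y, |k x y| ≤ K) (B C : ι → Y) :
    |crossMean k B C| ≤ K := by
  have hpos : (0 : ℝ) < (Fintype.card ι : ℝ) ^ 2 := by positivity
  calc |crossMean k B C|
        ≤ ((Fintype.card ι : ℝ) ^ 2)⁻¹ * ∑ j, ∑ t, |k (B j) (C t)| := by
        rw [crossMean, abs_mul, abs_of_pos (inv_pos.2 hpos)]
        gcongr
        exact (abs_sum_le_sum_abs _ _).trans (sum_le_sum fun j _ => abs_sum_le_sum_abs _ _)
    _ ≤ ((Fintype.card ι : ℝ) ^ 2)⁻¹ * ∑ j : ι, ∑ t : ι, K := by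
        gcongr with j _ t
        exact hK _ _
    _ = K := by
        rw [sum_const, sum_const, card_univ, nsmul_eq_mul, nsmul_eq_mul]
        field_simp

theorem measurable_crossMean [MeasurableSpace Y] [Fintype ι] (hk : Measurable (uncurry k)) :
    Measurable (uncurry (crossMean (ι := ι) k)) :=
  (Finset.measurable_sum _ fun j _ => Finset.measurable_sum _ fun t _ =>
    hk.comp (f := fun z : (ι → Y) × (ι → Y) => (z.1 j, z.2 t)) (by fun_prop)).const_mul _

theorem measurable_blockKernel [MeasurableSpace Y] [Fintype ι] (hk : Measurable (uncurry k)) :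
    Measurable (uncurry (blockKernel (ι := ι) k)) :=
  ((measurable_uStat hk).comp measurable_fst).sub (measurable_crossMean hk)

theorem abs_blockKernel_le [Fintype ι] (hι : 2 ≤ Fintype.card ι) (hK : ∀ x y, |k x y| ≤ K)
    (B C : ι → Y) : |blockKernel k B C| ≤ 2 * K := by
  have : Nonempty ι := Fintype.card_pos_iff.1 (by omega)
  exact (abs_sub _ _).trans (by linarith [abs_uStat_le hι hK B, abs_crossMean_le hK B C])

end BlockKernel

section TwoStageSampling

variable {Y : Type*} [MeasurableSpace Y]

def blockLaw (ν : Measure (ProbabilityMeasure Y)) (m : ℕ) : Measure (Fin m → Y) :=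
  ν.bind fun P => Measure.pi fun _ => (P : Measure Y)

theorem measurable_probabilityMeasure_toMeasure :
    Measurable fun P : ProbabilityMeasure Y => (P : Measure Y) :=
  measurable_iff_comap_le.2 le_rfl

theorem measurable_pi_probabilityMeasure (m : ℕ) :
    Measurable fun P : ProbabilityMeasure Y => Measure.pi fun _ : Fin m => (P : Measure Y) :=
  measurable_measure_pi (κ := fun _ (P : ProbabilityMeasure Y) => (P : Measure Y))
    fun _ => measurable_probabilityMeasure_toMeasure

variable {ν : Measure (ProbabilityMeasure Y)} {m : ℕ}

theorem measurePreserving_eval_blockLaw (j : Fin m) :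
    MeasurePreserving (fun B : Fin m → Y => B j) (blockLaw ν m) (pmJoin ν) := by
  refine ⟨measurable_pi_apply j, Measure.ext fun s hs => ?_⟩
  rw [Measure.map_apply (measurable_pi_apply j) hs, blockLaw, pmJoin,
    Measure.bind_apply (measurable_pi_apply j hs) (measurable_pi_probabilityMeasure m).aemeasurable,
    Measure.bind_apply hs measurable_probabilityMeasure_toMeasure.aemeasurable]
  exact lintegral_congr fun P => (measurePreserving_eval _ j).measure_preimage hs.nullMeasurableSet

theorem integral_blockLaw {E : Type*} [NormedAddCommGroup E] [NormedSpace ℝ E]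
    {f : (Fin m → Y) → E} (hf : Integrable f (blockLaw ν m)) :
    ∫ B, f B ∂blockLaw ν m
      = ∫ P, ∫ B, f B ∂Measure.pi (fun _ => (P : Measure Y)) ∂ν :=
  Measure.integral_bind (measurable_pi_probabilityMeasure m) hf

variable [IsProbabilityMeasure ν]

instance : IsProbabilityMeasure (pmJoin ν) :=
  isProbabilityMeasure_bind measurable_probabilityMeasure_toMeasure.aemeasurable
    (ae_of_all _ inferInstance)

instance : IsProbabilityMeasure (blockLaw ν m) :=
  isProbabilityMeasure_bind (measurable_pi_probabilityMeasure m).aemeasurable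
    (ae_of_all _ inferInstance)

theorem twoStage_eq_pi (n : ℕ) : twoStage ν n m = Measure.pi fun _ => blockLaw ν m :=
  Measure.pi_bind
    (κ := fun _ (P : ProbabilityMeasure Y) => Measure.pi fun _ : Fin m => (P : Measure Y))
    fun _ => measurable_pi_probabilityMeasure m

end TwoStageSampling

section TwoStageMeans

variable {Y : Type*} [MeasurableSpace Y] {ν : Measure (ProbabilityMeasure Y)}
  [IsProbabilityMeasure ν] {m : ℕ} {k : Y → Y → ℝ} {K : ℝ}

theorem integral_uStat_blockLaw (hm : 2 ≤ m) (hk : Measurable (uncurry k))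
    (hK : ∀ x y, |k x y| ≤ K) :
    ∫ B, uStat k B ∂blockLaw ν m
      = ∫ P, kerInner k (P : Measure Y) (P : Measure Y) ∂ν := by
  have hm' : 2 ≤ Fintype.card (Fin m) := by simpa using hm
  rw [integral_blockLaw (integrable_of_abs_le (measurable_uStat hk) (abs_uStat_le hm' hK))]
  exact integral_congr_ae (ae_of_all _ fun P =>
    integral_uStat hm' (integrable_of_abs_le hk fun z => hK _ _))

theorem integral_crossMean_blockLaw (hm : m ≠ 0) (hk : Measurable (uncurry k))
    (hK : ∀ x y, |k x y| ≤ K) :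
    ∫ z, crossMean k z.1 z.2 ∂(blockLaw ν m).prod (blockLaw ν m)
      = kerInner k (pmJoin ν) (pmJoin ν) := by
  have hkz (j t : Fin m) : Measurable fun z : (Fin m → Y) × (Fin m → Y) => k (z.1 j) (z.2 t) :=
    hk.comp (f := fun z : (Fin m → Y) × (Fin m → Y) => (z.1 j, z.2 t)) (by fun_prop)
  have hint (j t : Fin m) := integrable_of_abs_le (μ := (blockLaw ν m).prod (blockLaw ν m))
    (hkz j t) fun z => hK _ _
  have hpair (j t : Fin m) : ∫ z, k (z.1 j) (z.2 t) ∂(blockLaw ν m).prod (blockLaw ν m)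
      = kerInner k (pmJoin ν) (pmJoin ν) :=
    ((measurePreserving_eval_blockLaw j).prod (measurePreserving_eval_blockLaw t)
      |>.integral_comp_of_aestronglyMeasurable hk.aestronglyMeasurable).trans
      (integral_prod _ (integrable_of_abs_le hk fun z => hK _ _))
  simp only [crossMean]
  rw [integral_const_mul,
    integral_finsetSum _ fun j _ => integrable_finsetSum _ fun t _ => hint j t]
  simp_rw [integral_finsetSum _ fun t _ => hint _ t, hpair, sum_const, card_univ, nsmul_eq_mul,
    Fintype.card_fin]
  have : (m : ℝ) ≠ 0 := by exact_mod_cast hm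
  field_simp

theorem integral_integral_blockKernel (hm : 2 ≤ m) (hk : Measurable (uncurry k))
    (hK : ∀ x y, |k x y| ≤ K) :
    ∫ B, ∫ C, blockKernel k B C ∂blockLaw ν m ∂blockLaw ν m
      = (∫ P, kerInner k (P : Measure Y) (P : Measure Y) ∂ν)
        - kerInner k (pmJoin ν) (pmJoin ν) := by
  have hm' : 2 ≤ Fintype.card (Fin m) := by simpa using hm
  have : Nonempty (Fin m) := ⟨⟨0, by omega⟩⟩
  calc _ = ∫ z, blockKernel k z.1 z.2 ∂(blockLaw ν m).prod (blockLaw ν m) :=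
        (integral_prod _ (integrable_of_abs_le (measurable_blockKernel hk)
          fun z => abs_blockKernel_le hm' hK z.1 z.2)).symm
    _ = ∫ z, uStat k z.1 ∂(blockLaw ν m).prod (blockLaw ν m)
        - ∫ z, crossMean k z.1 z.2 ∂(blockLaw ν m).prod (blockLaw ν m) :=
        integral_sub (integrable_of_abs_le ((measurable_uStat hk).comp measurable_fst)
            fun z => abs_uStat_le hm' hK z.1)
          (integrable_of_abs_le (measurable_crossMean hk) fun z => abs_crossMean_le hK z.1 z.2)
    _ = _ := by
        rw [measurePreserving_fst.integral_comp_of_aestronglyMeasurable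
            (measurable_uStat hk).aestronglyMeasurable, integral_uStat_blockLaw hm hk hK,
          integral_crossMean_blockLaw (by omega) hk hK]

end TwoStageMeans

theorem varEst_weakly_consistent_general
    {Y : Type*} [MeasurableSpace Y]
    (k : Y → Y → ℝ)
    (hk_meas : Measurable fun p : Y × Y => k p.1 p.2)
    (hk_bdd : ∃ K, ∀ x y, |k x y| ≤ K)
    (ν : Measure (ProbabilityMeasure Y)) [IsProbabilityMeasure ν]
    (m : ℕ) (hm : 2 ≤ m) :
    ∀ ε : ℝ, 0 < ε →
      Filter.Tendsto
        (fun n : ℕ =>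
          twoStage ν n m
            {X | ε ≤ |varEst k n m X
              - ((∫ P, kerInner k (P : Measure Y) (P : Measure Y) ∂ν)
                  - kerInner k (pmJoin ν) (pmJoin ν))|})
        Filter.atTop (nhds 0) := by
  intro ε hε
  obtain ⟨K, hK⟩ := hk_bdd
  have hlim := tendsto_measure_abs_uStat_sub_ge (μ := blockLaw ν m)
    (measurable_blockKernel hk_meas) (abs_blockKernel_le (by simpa using hm) hK) hε
  rw [integral_integral_blockKernel hm hk_meas hK] at hlim
  refine hlim.congr' (eventually_atTop.2 ⟨2, fun n hn => ?_⟩)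
  simp only [twoStage_eq_pi, varEst_eq_uStat_blockKernel k hn]

/-- Weak consistency of the distributional variance estimator in the number of outer
samples: for fixed `m ≥ 2` and every `ε > 0`,
`μ_{n,m}(|V̂ar_k^{(n,m)} − Var_k(ν)| ≥ ε) → 0` as `n → ∞`. -/
theorem varEst_weakly_consistent
    {Y : Type*} [MeasurableSpace Y]
    (k : Y → Y → ℝ)
    (hk_meas : Measurable fun p : Y × Y => k p.1 p.2)
    (hk_symm : ∀ x y, k x y = k y x)
    (hk_bdd : ∃ K, ∀ x y, |k x y| ≤ K)
    (hk_psd : ∀ (N : ℕ) (x : Fin N → Y) (a : Fin N → ℝ),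
      0 ≤ ∑ i, ∑ j, a i * k (x i) (x j) * a j)
    (ν : Measure (ProbabilityMeasure Y)) [IsProbabilityMeasure ν]
    (m : ℕ) (hm : 2 ≤ m) :
    ∀ ε : ℝ, 0 < ε →
      Filter.Tendsto
        (fun n : ℕ =>
          twoStage ν n m
            {X | ε ≤ |varEst k n m X
              - ((∫ P, kerInner k (P : Measure Y) (P : Measure Y) ∂ν)
                  - kerInner k (pmJoin ν) (pmJoin ν))|})
        Filter.atTop (nhds 0) :=
  varEst_weakly_consistent_general k hk_meas hk_bdd ν m hm
end
end

section
/- Let n ≥ 2 and m ≥ 1 and let μ_{n,m} be the two-stage pair-sampling law associated with a probability measure ν on pairs of probability measures on 𝒴. Then the distributional covariance estimator is unbiased: ∫ Ĉov_k^{(n,m)}(X, Y) dμ_{n,m}(X, Y) = Cov_k(ν) = ∫ ⟨P|k|Q⟩ dν(P, Q) − ⟨join(ν₁)|k|join(ν₂)⟩, where ν₁, ν₂ are the two marginals of ν. -/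
open MeasureTheory ProbabilityTheory

noncomputable section

/-- The two-stage pair-sampling law `μ_{n,m}` on `Fin n → (Fin m → Y) × (Fin m → Y)`:
sample pairs `(P₁, Q₁), …, (Pₙ, Qₙ)` i.i.d. from `ν`, then conditionally on `(Pᵢ, Qᵢ)`
sample `X_{i1}, …, X_{im}` i.i.d. from `Pᵢ` and `Y_{i1}, …, Y_{im}` i.i.d. from `Qᵢ`,
conditionally independently, and independently across `i`. -/
def pairTwoStage {Y : Type*} [MeasurableSpace Y]
    (ν : Measure (ProbabilityMeasure Y × ProbabilityMeasure Y)) (n m : ℕ) :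
    Measure (Fin n → (Fin m → Y) × (Fin m → Y)) :=
  (Measure.pi fun _ : Fin n => ν).bind
    (fun PQ => Measure.pi fun i : Fin n =>
      (Measure.pi fun _ : Fin m => ((PQ i).1 : Measure Y)).prod
        (Measure.pi fun _ : Fin m => ((PQ i).2 : Measure Y)))

/-- The distributional covariance estimator
`Ĉov_k^{(n,m)}(X, Y) = (1/(n m²)) Σᵢ Σ_{j,t} k(X_{ij}, Y_{it})
  − (1/(n (n−1) m²)) Σ_{i≠s} Σ_{j,t} k(X_{ij}, Y_{st})`. -/
def covEst {Y : Type*} (k : Y → Y → ℝ) (n m : ℕ) (X Y' : Fin n → Fin m → Y) : ℝ :=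
  (1 / ((n : ℝ) * (m : ℝ) ^ 2)) * ∑ i, ∑ j, ∑ t, k (X i j) (Y' i t)
  - (1 / ((n : ℝ) * ((n : ℝ) - 1) * (m : ℝ) ^ 2)) *
      ∑ i, ∑ s ∈ Finset.univ.erase i, ∑ j, ∑ t, k (X i j) (Y' s t)

/-!
Conditionally on the pairs, `X_{ij}` and `Y_{st}` are independent with laws `Pᵢ` and `Qₛ`, so
`E k(X_{ij}, Y_{st}) = E ⟨Pᵢ|k|Qₛ⟩`. On the diagonal `i = s` the pair `(Pᵢ, Qᵢ)` has law `ν`, which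
gives `∫ ⟨P|k|Q⟩ dν`. Off the diagonal `Pᵢ` and `Qₛ` are independent with laws `ν₁` and `ν₂`, and
the `ν₁ ⊗ ν₂`-mixture of the measures `P ⊗ Q` is `join(ν₁) ⊗ join(ν₂)`, which gives
`⟨join(ν₁)|k|join(ν₂)⟩`. The estimator averages the `n m²` diagonal and the `n (n-1) m²`
off-diagonal terms.
-/

namespace MeasureTheory

variable {α β γ δ E : Type*} [MeasurableSpace α] [MeasurableSpace β] [MeasurableSpace γ]
  [MeasurableSpace δ] [NormedAddCommGroup E] [NormedSpace ℝ E]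

lemma Measure.integral_comp {μ : Measure α} (κ : Kernel α β) {f : β → E}
    (hf : Integrable f (κ ∘ₘ μ)) : ∫ b, f b ∂(κ ∘ₘ μ) = ∫ a, ∫ b, f b ∂κ a ∂μ := by
  rw [Measure.comp_eq_comp_const_apply] at hf ⊢
  rw [Kernel.integral_comp hf]
  rfl

lemma integral_finsetSum_finsetSum {ι κ : Type*} {μ : Measure α} (s : Finset ι)
    (t : ι → Finset κ) {f : ι → κ → α → E} (hf : ∀ i j, Integrable (f i j) μ) :
    ∫ a, ∑ i ∈ s, ∑ j ∈ t i, f i j a ∂μ = ∑ i ∈ s, ∑ j ∈ t i, ∫ a, f i j a ∂μ := by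
  rw [integral_finsetSum _ fun i _ => integrable_finsetSum _ fun j _ => hf i j]
  exact Finset.sum_congr rfl fun i _ => integral_finsetSum _ fun j _ => hf i j

lemma Measurable.measure_pi {ι : Type*} [Fintype ι] {β : ι → Type*}
    [∀ i, MeasurableSpace (β i)] {μ : α → ∀ i, Measure (β i)}
    [∀ a i, IsProbabilityMeasure (μ a i)] (hμ : ∀ i, Measurable fun a => μ a i) :
    Measurable fun a => Measure.pi (μ a) := by
  refine .measure_of_isPiSystem_of_isProbabilityMeasure generateFrom_pi.symm isPiSystem_pi ?_
  rintro _ ⟨s, hs, rfl⟩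
  simp_rw [Measure.pi_pi]
  exact Finset.measurable_prod _ fun i _ => (Measure.measurable_coe (hs i trivial)).comp (hμ i)

lemma Measurable.measure_prod {μ : α → Measure β} {η : α → Measure γ}
    [∀ a, IsProbabilityMeasure (μ a)] [∀ a, IsProbabilityMeasure (η a)]
    (hμ : Measurable μ) (hη : Measurable η) : Measurable fun a => (μ a).prod (η a) := by
  refine .measure_of_isPiSystem_of_isProbabilityMeasure generateFrom_prod.symm isPiSystem_prod ?_
  rintro _ ⟨s, hs, t, ht, rfl⟩
  simp_rw [Measure.prod_prod]
  exact ((Measure.measurable_coe hs).comp hμ).mul ((Measure.measurable_coe ht).comp hη)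

lemma Measure.map_pi_comp_eval {ι : Type*} [Fintype ι] {β : ι → Type*}
    [∀ i, MeasurableSpace (β i)] (μ : ∀ i, Measure (β i)) [∀ i, IsProbabilityMeasure (μ i)]
    (i : ι) {f : β i → γ} (hf : Measurable f) :
    (Measure.pi μ).map (fun x => f (x i)) = (μ i).map f := by
  rw [← (measurePreserving_eval μ i).map_eq, Measure.map_map hf (measurable_pi_apply i)]
  rfl

lemma Measure.map_pi_eval_prod_eval {ι : Type*} [Fintype ι] {β : ι → Type*}
    [∀ i, MeasurableSpace (β i)] (μ : ∀ i, Measure (β i)) [∀ i, IsProbabilityMeasure (μ i)]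
    {i s : ι} (his : i ≠ s) {f : β i → γ} {g : β s → δ} (hf : Measurable f) (hg : Measurable g) :
    (Measure.pi μ).map (fun x => (f (x i), g (x s))) = ((μ i).map f).prod ((μ s).map g) := by
  have hind : IndepFun (fun x => f (x i)) (fun x => g (x s)) (Measure.pi μ) :=
    ((iIndepFun_pi (μ := μ) (X := fun _ => id) fun _ => aemeasurable_id).indepFun his).comp hf hg
  rw [← map_pi_comp_eval μ i hf, ← map_pi_comp_eval μ s hg]
  exact hind.map_prod_eq_prod_map_map (hf.comp (measurable_pi_apply i)).aemeasurable
    (hg.comp (measurable_pi_apply s)).aemeasurable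

lemma Measure.map_pi_prod_eval_fst_snd {ι : Type*} [Fintype ι] (μ : ι → Measure α)
    (η : ι → Measure β) [∀ i, IsProbabilityMeasure (μ i)] [∀ i, IsProbabilityMeasure (η i)]
    (i s : ι) {f : α → γ} {g : β → δ} (hf : Measurable f) (hg : Measurable g) :
    (Measure.pi fun r => (μ r).prod (η r)).map (fun x => (f (x i).1, g (x s).2))
      = ((μ i).map f).prod ((η s).map g) := by
  rw [show (fun x : ι → α × β => (f (x i).1, g (x s).2))
      = Prod.map (fun u => f (u i)) (fun v => g (v s)) ∘
          MeasurableEquiv.arrowProdEquivProdArrow α β ι from rfl,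
    ← Measure.map_map (by fun_prop) (MeasurableEquiv.measurable _),
    (measurePreserving_arrowProdEquivProdArrow α β ι μ η).map_eq,
    ← Measure.map_prod_map _ _ (by fun_prop) (by fun_prop),
    map_pi_comp_eval μ i hf, map_pi_comp_eval η s hg]

end MeasureTheory

section PairSampling

variable {Y : Type*} [MeasurableSpace Y]

def toMeasureKernel : Kernel (ProbabilityMeasure Y) Y :=
  ⟨fun P => P, measurable_subtype_coe⟩

@[simp]
lemma toMeasureKernel_apply (P : ProbabilityMeasure Y) : toMeasureKernel P = (P : Measure Y) :=
  rfl

instance : IsMarkovKernel (toMeasureKernel (Y := Y)) := ⟨fun P => P.prop⟩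

lemma pmJoin_eq_comp (ρ : Measure (ProbabilityMeasure Y)) : pmJoin ρ = toMeasureKernel ∘ₘ ρ :=
  rfl

instance (ρ : Measure (ProbabilityMeasure Y)) [IsProbabilityMeasure ρ] :
    IsProbabilityMeasure (pmJoin ρ) := by
  rw [pmJoin_eq_comp]; infer_instance

def pairProdKernel : Kernel (ProbabilityMeasure Y × ProbabilityMeasure Y) (Y × Y) :=
  ⟨fun PQ => (PQ.1 : Measure Y).prod (PQ.2 : Measure Y), ProbabilityMeasure.measurable_fun_prod⟩

@[simp]
lemma pairProdKernel_apply (PQ : ProbabilityMeasure Y × ProbabilityMeasure Y) :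
    pairProdKernel PQ = (PQ.1 : Measure Y).prod (PQ.2 : Measure Y) :=
  rfl

instance : IsMarkovKernel (pairProdKernel (Y := Y)) :=
  ⟨fun _ => inferInstanceAs (IsProbabilityMeasure (Measure.prod _ _))⟩

def pairSampleKernel (n m : ℕ) : Kernel (Fin n → ProbabilityMeasure Y × ProbabilityMeasure Y)
    (Fin n → (Fin m → Y) × (Fin m → Y)) where
  toFun PQ := Measure.pi fun i => (Measure.pi fun _ : Fin m => ((PQ i).1 : Measure Y)).prod
    (Measure.pi fun _ : Fin m => ((PQ i).2 : Measure Y))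
  measurable' := by
    refine Measurable.measure_pi fun i => Measurable.measure_prod ?_ ?_ <;>
      refine Measurable.measure_pi fun _ => measurable_subtype_coe.comp ?_
    exacts [measurable_fst.comp (measurable_pi_apply i), measurable_snd.comp (measurable_pi_apply i)]

instance (n m : ℕ) : IsMarkovKernel (pairSampleKernel (Y := Y) n m) :=
  ⟨fun _ => inferInstanceAs (IsProbabilityMeasure (Measure.pi _))⟩

lemma pairTwoStage_eq_comp (ν : Measure (ProbabilityMeasure Y × ProbabilityMeasure Y)) (n m : ℕ) :
    pairTwoStage ν n m = pairSampleKernel n m ∘ₘ Measure.pi fun _ => ν :=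
  rfl

instance (ν : Measure (ProbabilityMeasure Y × ProbabilityMeasure Y)) [IsProbabilityMeasure ν]
    (n m : ℕ) : IsProbabilityMeasure (pairTwoStage ν n m) := by
  rw [pairTwoStage_eq_comp]; infer_instance

lemma pairSampleKernel_map_eval_pair {n m : ℕ}
    (PQ : Fin n → ProbabilityMeasure Y × ProbabilityMeasure Y) (i s : Fin n) (j t : Fin m) :
    (pairSampleKernel n m PQ).map (fun Z => ((Z i).1 j, (Z s).2 t))
      = pairProdKernel ((PQ i).1, (PQ s).2) := by
  rw [pairSampleKernel, Kernel.coe_mk, Measure.map_pi_prod_eval_fst_snd _ _ i s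
    (measurable_pi_apply j) (measurable_pi_apply t), (measurePreserving_eval _ j).map_eq,
    (measurePreserving_eval _ t).map_eq, pairProdKernel_apply]

lemma map_pairTwoStage_eval_pair (ν : Measure (ProbabilityMeasure Y × ProbabilityMeasure Y))
    {n m : ℕ} (i s : Fin n) (j t : Fin m) :
    (pairTwoStage ν n m).map (fun Z => ((Z i).1 j, (Z s).2 t))
      = pairProdKernel ∘ₘ (Measure.pi fun _ => ν).map fun PQ => ((PQ i).1, (PQ s).2) := by
  have hφ : Measurable fun Z : Fin n → (Fin m → Y) × (Fin m → Y) => ((Z i).1 j, (Z s).2 t) := by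
    fun_prop
  have hψ : Measurable fun PQ : Fin n → ProbabilityMeasure Y × ProbabilityMeasure Y =>
      ((PQ i).1, (PQ s).2) := by
    fun_prop
  rw [pairTwoStage_eq_comp, Measure.map_comp _ _ hφ]
  ext S hS
  rw [Measure.bind_apply hS (Kernel.aemeasurable _), Measure.bind_apply hS (Kernel.aemeasurable _),
    lintegral_map (Kernel.measurable_coe _ hS) hψ]
  simp_rw [Kernel.map_apply _ hφ, pairSampleKernel_map_eval_pair]

lemma pairProdKernel_comp_prod (ρ₁ ρ₂ : Measure (ProbabilityMeasure Y))
    [IsProbabilityMeasure ρ₁] [IsProbabilityMeasure ρ₂] :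
    pairProdKernel ∘ₘ ρ₁.prod ρ₂ = (pmJoin ρ₁).prod (pmJoin ρ₂) := by
  refine (Measure.prod_eq fun s t hs ht => ?_).symm
  have hs' : Measurable fun P : ProbabilityMeasure Y => (P : Measure Y) s :=
    (Measure.measurable_coe hs).comp measurable_subtype_coe
  have ht' : Measurable fun P : ProbabilityMeasure Y => (P : Measure Y) t :=
    (Measure.measurable_coe ht).comp measurable_subtype_coe
  rw [Measure.bind_apply (hs.prod ht) (Kernel.aemeasurable _), pmJoin_eq_comp, pmJoin_eq_comp,
    Measure.bind_apply hs (Kernel.aemeasurable _), Measure.bind_apply ht (Kernel.aemeasurable _)]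
  simp_rw [toMeasureKernel_apply, pairProdKernel_apply, Measure.prod_prod]
  exact lintegral_prod_mul hs'.aemeasurable ht'.aemeasurable

end PairSampling

section KernelIntegrals

variable {Y : Type*} [MeasurableSpace Y] {k : Y → Y → ℝ} {C : ℝ}

lemma integrable_uncurry_of_abs_le (hk : Measurable fun p : Y × Y => k p.1 p.2)
    (hC : ∀ x y, |k x y| ≤ C) (μ : Measure (Y × Y)) [IsFiniteMeasure μ] :
    Integrable (fun p : Y × Y => k p.1 p.2) μ :=
  .of_bound hk.aestronglyMeasurable C (ae_of_all _ fun p => hC p.1 p.2)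

lemma kerInner_eq_integral_prod (hk : Measurable fun p : Y × Y => k p.1 p.2)
    (hC : ∀ x y, |k x y| ≤ C) (P Q : Measure Y) [IsFiniteMeasure P] [IsFiniteMeasure Q] :
    kerInner k P Q = ∫ p, k p.1 p.2 ∂P.prod Q :=
  (integral_prod _ (integrable_uncurry_of_abs_le hk hC _)).symm

lemma integral_pairProdKernel_comp (hk : Measurable fun p : Y × Y => k p.1 p.2)
    (hC : ∀ x y, |k x y| ≤ C) (π : Measure (ProbabilityMeasure Y × ProbabilityMeasure Y))
    [IsFiniteMeasure π] :
    ∫ p, k p.1 p.2 ∂(pairProdKernel ∘ₘ π) = ∫ PQ, kerInner k PQ.1 PQ.2 ∂π := by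
  rw [Measure.integral_comp _ (integrable_uncurry_of_abs_le hk hC _)]
  exact integral_congr_ae (ae_of_all _ fun PQ => (kerInner_eq_integral_prod hk hC _ _).symm)

lemma integral_pairTwoStage_eval (hk : Measurable fun p : Y × Y => k p.1 p.2)
    (hC : ∀ x y, |k x y| ≤ C) (ν : Measure (ProbabilityMeasure Y × ProbabilityMeasure Y))
    [IsProbabilityMeasure ν] {n m : ℕ} (i s : Fin n) (j t : Fin m) :
    ∫ Z, k ((Z i).1 j) ((Z s).2 t) ∂(pairTwoStage ν n m)
      = if i = s then ∫ PQ, kerInner k PQ.1 PQ.2 ∂ν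
        else kerInner k (pmJoin (ν.map Prod.fst)) (pmJoin (ν.map Prod.snd)) := by
  have hφ : Measurable fun Z : Fin n → (Fin m → Y) × (Fin m → Y) => ((Z i).1 j, (Z s).2 t) := by
    fun_prop
  rw [← integral_map (f := fun p : Y × Y => k p.1 p.2) hφ.aemeasurable hk.aestronglyMeasurable,
    map_pairTwoStage_eval_pair, integral_pairProdKernel_comp hk hC]
  split_ifs with his
  · subst his
    rw [(measurePreserving_eval _ i).map_eq]
  · have := Measure.isProbabilityMeasure_map (μ := ν) measurable_fst.aemeasurable
    have := Measure.isProbabilityMeasure_map (μ := ν) measurable_snd.aemeasurable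
    rw [Measure.map_pi_eval_prod_eval _ his measurable_fst measurable_snd,
      ← integral_pairProdKernel_comp hk hC, pairProdKernel_comp_prod,
      kerInner_eq_integral_prod hk hC]

end KernelIntegrals

lemma integral_covEst_of_integral_eq {Y Ω : Type*} [MeasurableSpace Ω] {μ : Measure Ω}
    {k : Y → Y → ℝ} {n m : ℕ} (hn : 2 ≤ n) (hm : 1 ≤ m) {X Y' : Ω → Fin n → Fin m → Y}
    {A B : ℝ} (hint : ∀ i s j t, Integrable (fun ω => k (X ω i j) (Y' ω s t)) μ)
    (hterm : ∀ i s j t, ∫ ω, k (X ω i j) (Y' ω s t) ∂μ = if i = s then A else B) :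
    ∫ ω, covEst k n m (X ω) (Y' ω) ∂μ = A - B := by
  have hblock_int : ∀ i s, Integrable (fun ω => ∑ j, ∑ t, k (X ω i j) (Y' ω s t)) μ :=
    fun i s => integrable_finsetSum _ fun j _ => integrable_finsetSum _ fun t _ => hint i s j t
  have hint_sum : ∀ S : Fin n → Finset (Fin n),
      Integrable (fun ω => ∑ i, ∑ s ∈ S i, ∑ j, ∑ t, k (X ω i j) (Y' ω s t)) μ :=
    fun S => integrable_finsetSum _ fun i _ => integrable_finsetSum _ fun s _ => hblock_int i s
  have hsum : ∀ S : Fin n → Finset (Fin n),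
      ∫ ω, ∑ i, ∑ s ∈ S i, ∑ j, ∑ t, k (X ω i j) (Y' ω s t) ∂μ
        = m ^ 2 * ∑ i, ∑ s ∈ S i, if i = s then A else B := by
    intro S
    simp [integral_finsetSum_finsetSum _ _ hblock_int, integral_finsetSum_finsetSum _ _ (hint _ _),
      hterm, Finset.mul_sum, sq, mul_assoc]
  have hdiag : ∀ ω, ∑ i, ∑ j, ∑ t, k (X ω i j) (Y' ω i t)
      = ∑ i, ∑ s ∈ {i}, ∑ j, ∑ t, k (X ω i j) (Y' ω s t) := by
    simp only [Finset.sum_singleton, implies_true]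
  have hoff : ∀ i : Fin n, ∑ s ∈ Finset.univ.erase i, (if i = s then A else B) = (n - 1) * B := by
    intro i
    rw [Finset.sum_congr rfl fun s hs => if_neg (Finset.ne_of_mem_erase hs).symm,
      Finset.sum_const, Finset.card_erase_of_mem (Finset.mem_univ i), Finset.card_univ,
      Fintype.card_fin, nsmul_eq_mul, Nat.cast_sub (by omega), Nat.cast_one]
  simp only [covEst, hdiag]
  rw [integral_sub ((hint_sum _).const_mul _) ((hint_sum _).const_mul _), integral_const_mul,
    integral_const_mul, hsum, hsum]
  simp only [Finset.sum_singleton, if_pos, hoff, Finset.sum_const, Finset.card_univ,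
    Fintype.card_fin, nsmul_eq_mul]
  have hn₀ : (n : ℝ) - 1 ≠ 0 := by
    have : (2 : ℝ) ≤ n := by exact_mod_cast hn
    linarith
  have hm₀ : (m : ℝ) ≠ 0 := Nat.cast_ne_zero.mpr (by omega)
  field_simp

theorem covEst_unbiased_general
    {Y : Type*} [MeasurableSpace Y]
    (k : Y → Y → ℝ)
    (hk_meas : Measurable fun p : Y × Y => k p.1 p.2)
    (hk_bdd : ∃ K, ∀ x y, |k x y| ≤ K)
    (ν : Measure (ProbabilityMeasure Y × ProbabilityMeasure Y)) [IsProbabilityMeasure ν]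
    (n m : ℕ) (hn : 2 ≤ n) (hm : 1 ≤ m) :
    ∫ Z, covEst k n m (fun i => (Z i).1) (fun i => (Z i).2) ∂(pairTwoStage ν n m)
      = (∫ PQ, kerInner k (PQ.1 : Measure Y) (PQ.2 : Measure Y) ∂ν)
        - kerInner k (pmJoin (ν.map Prod.fst)) (pmJoin (ν.map Prod.snd)) := by
  obtain ⟨C, hC⟩ := hk_bdd
  refine integral_covEst_of_integral_eq hn hm (fun i s j t => ?_)
    (integral_pairTwoStage_eval hk_meas hC ν)
  have hφ : Measurable fun Z : Fin n → (Fin m → Y) × (Fin m → Y) => ((Z i).1 j, (Z s).2 t) := by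
    fun_prop
  exact (integrable_uncurry_of_abs_le hk_meas hC _).comp_measurable hφ

/-- Unbiasedness of the distributional covariance estimator:
`E_{μ_{n,m}}[Ĉov_k^{(n,m)}] = Cov_k(ν) = ∫ ⟨P|k|Q⟩ dν(P,Q) − ⟨join(ν₁)|k|join(ν₂)⟩`. -/
theorem covEst_unbiased
    {Y : Type*} [MeasurableSpace Y]
    (k : Y → Y → ℝ)
    (hk_meas : Measurable fun p : Y × Y => k p.1 p.2)
    (hk_symm : ∀ x y, k x y = k y x)
    (hk_bdd : ∃ K, ∀ x y, |k x y| ≤ K)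
    (hk_psd : ∀ (N : ℕ) (x : Fin N → Y) (a : Fin N → ℝ),
      0 ≤ ∑ i, ∑ j, a i * k (x i) (x j) * a j)
    (ν : Measure (ProbabilityMeasure Y × ProbabilityMeasure Y)) [IsProbabilityMeasure ν]
    (n m : ℕ) (hn : 2 ≤ n) (hm : 1 ≤ m) :
    ∫ Z, covEst k n m (fun i => (Z i).1) (fun i => (Z i).2) ∂(pairTwoStage ν n m)
      = (∫ PQ, kerInner k (PQ.1 : Measure Y) (PQ.2 : Measure Y) ∂ν)
        - kerInner k (pmJoin (ν.map Prod.fst)) (pmJoin (ν.map Prod.snd)) :=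
  covEst_unbiased_general k hk_meas hk_bdd ν n m hn hm
end
end
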